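/- Let p be a prime, m, d ∈ ℕ, and k = (k_1,…,k_d) ∈ ℕ^d. In the polynomial ring ℚ(q)[x_1,…,x_d, η_1,…,η_d, ζ_1,…,ζ_d] the following identity holds: ∏_{i=1}^{d} [∏_{j=0}^{k_i−1} (η_i + ζ_i + (1−q^j)x_i)] / (⌊k_i/p^m⌋)_{q^{p^m}}! = Σ_{k' ∈ ℕ^d, 0 ≤ k' ≤ k componentwise} (∏_{i=1}^{d} ⟨k_i choose k'_i⟩_{(m),q}) · ∏_{i=1}^{d} [∏_{j=0}^{k'_i−1}(η_i + (1−q^j)x_i)] / (⌊k'_i/p^m⌋)_{q^{p^m}}! · ∏_{i=1}^{d} [∏_{j=0}^{k_i−k'_i−1}(ζ_i + (1−q^j)(x_i+η_i))] / (⌊(k_i−k'_i)/p^m⌋)_{q^{p^m}}!. (This is the explicit comultiplication formula δ_1^1(ξ^{{k}_{(m),q}}) = Σ_{0≤k'≤k} ⟨k choose k'⟩_{(m),q} ξ^{{k'}_{(m),q}} ⊗' ξ^{{k−k'}_{(m),q}} for the level-m twisted divided powers, with η_i, ζ_i the two coordinate differences and x_i+η_i the shifted base point.) -/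

import Mathlib

noncomputable section

open Polynomial

/-- `ℤ[q]`, the polynomial ring in one variable `q` over `ℤ`. -/
abbrev Zq : Type := Polynomial ℤ

/-- `ℚ(q)`, realized as the fraction field of `ℤ[q]`. -/
abbrev Qq : Type := FractionRing Zq

/-- The canonical embedding `ℤ[q] → ℚ(q)`. -/
def ι : Zq →+* Qq := algebraMap Zq Qq

/-- The image of the variable `q` in `ℚ(q)`. -/
def qQ : Qq := ι X

/-- The `q^a`-integer `(n)_{q^a} = 1 + q^a + ⋯ + q^{a(n-1)}` in `ℤ[q]`. -/
def qInt (a n : ℕ) : Zq := ∑ j ∈ Finset.range n, X ^ (a * j)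

/-- The `q^a`-factorial `(n)_{q^a}! = ∏_{i=1}^{n} (i)_{q^a}` in `ℤ[q]`. -/
def qFact (a n : ℕ) : Zq := ∏ i ∈ Finset.range n, qInt a (i + 1)

/-- The prime ideal `(p, q - 1)` of `ℤ[q]`. -/
def pqIdeal (p : ℕ) : Ideal Zq := Ideal.span {C (p : ℤ), X - 1}

/-- Membership in the localization `ℤ[q]_{(p,q-1)}`, viewed inside `ℚ(q)`:
`x = a / b` with `b ∉ (p, q-1)`. -/
def InLoc (p : ℕ) (x : Qq) : Prop :=
  ∃ a b : Zq, b ∉ pqIdeal p ∧ x * ι b = ι a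

/-- Being a unit of the localization `ℤ[q]_{(p,q-1)}`, viewed inside `ℚ(q)`:
`x = a / b` with `a, b ∉ (p, q-1)`. -/
def IsLocUnit (p : ℕ) (x : Qq) : Prop :=
  ∃ a b : Zq, a ∉ pqIdeal p ∧ b ∉ pqIdeal p ∧ x * ι b = ι a

/-- The Gaussian `q`-binomial coefficient `(k choose k')_q` as an element of `ℚ(q)`. -/
def qBinomF (k k' : ℕ) : Qq :=
  ι (qFact 1 k) / (ι (qFact 1 k') * ι (qFact 1 (k - k')))

/-- The level-`m` coefficient `{k choose k'}_{(m),q}` as an element of `ℚ(q)`. -/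
def braceC (p m k k' : ℕ) : Qq :=
  ι (qFact (p ^ m) (k / p ^ m)) /
    (ι (qFact (p ^ m) (k' / p ^ m)) * ι (qFact (p ^ m) ((k - k') / p ^ m)))

/-- The level-`m` coefficient `⟨k choose k'⟩_{(m),q}` as an element of `ℚ(q)`. -/
def angleC (p m k k' : ℕ) : Qq := qBinomF k k' * (braceC p m k k')⁻¹

-- auxiliary lemmas, part 1
lemma iota_inj : Function.Injective ι := IsFractionRing.injective Zq Qq

lemma qInt_eval_one (a n : ℕ) : (qInt a n).eval 1 = n := by
  simp [qInt, Polynomial.eval_finset_sum]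

lemma qFact_ne_zero (a n : ℕ) : qFact a n ≠ 0 := by
  intro h
  have := congrArg (Polynomial.eval (1 : ℤ)) h
  rw [qFact, Polynomial.eval_prod] at this
  simp only [Polynomial.eval_zero] at this
  have hpos : (0:ℤ) < ∏ i ∈ Finset.range n, (qInt a (i+1)).eval 1 := by
    apply Finset.prod_pos
    intro i _
    rw [qInt_eval_one]
    positivity
  omega

lemma iota_qFact_ne_zero (a n : ℕ) : ι (qFact a n) ≠ 0 := by
  intro h
  exact qFact_ne_zero a n (iota_inj (by simpa using h))

lemma qFact_succ (a n : ℕ) : qFact a (n + 1) = qFact a n * qInt a (n + 1) :=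
  Finset.prod_range_succ _ _

lemma iota_qInt_split (a b : ℕ) :
    ι (qInt 1 (a + b)) = ι (qInt 1 a) + qQ ^ a * ι (qInt 1 b) := by
  have : qInt 1 (a + b) = qInt 1 a + X ^ a * qInt 1 b := by
    rw [qInt, Finset.sum_range_add]
    simp [qInt, Finset.mul_sum, pow_add]
  rw [this, map_add, map_mul, qQ]
  simp

set_option synthInstance.maxHeartbeats 1000000
set_option maxHeartbeats 1000000

lemma iota_qInt_ne_zero (a n : ℕ) : ι (qInt a (n + 1)) ≠ 0 := by
  intro h
  have h0 : qInt a (n + 1) = 0 := iota_inj (by rw [h, map_zero])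
  have := congrArg (Polynomial.eval (1 : ℤ)) h0
  rw [qInt_eval_one] at this
  simp only [Polynomial.eval_zero] at this
  omega

lemma qBinomF_zero (n : ℕ) : qBinomF n 0 = 1 := by
  rw [qBinomF]
  simp only [Nat.sub_zero, qFact]
  rw [Finset.range_zero, Finset.prod_empty, map_one, one_mul]
  exact div_self (iota_qFact_ne_zero 1 n)

lemma qBinomF_self (n : ℕ) : qBinomF n n = 1 := by
  rw [qBinomF]
  simp only [Nat.sub_self]
  rw [show qFact 1 0 = 1 from Finset.prod_range_zero _, map_one, mul_one]
  exact div_self (iota_qFact_ne_zero 1 n)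

lemma pascal_core (c e : ℕ) :
    qBinomF (c + e + 2) (c + 1) =
      qBinomF (c + e + 1) (c + 1) + qQ ^ (e + 1) * qBinomF (c + e + 1) c := by
  rw [qBinomF, qBinomF, qBinomF,
    show c + e + 2 - (c + 1) = e + 1 by omega,
    show c + e + 1 - (c + 1) = e by omega,
    show c + e + 1 - c = e + 1 by omega,
    show c + e + 2 = (c + e + 1) + 1 by omega,
    qFact_succ 1 (c + e + 1), qFact_succ 1 c, qFact_succ 1 e, map_mul, map_mul, map_mul,
    show c + e + 1 + 1 = (e + 1) + (c + 1) by omega, iota_qInt_split]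
  have h1 := iota_qFact_ne_zero 1 c
  have h2 := iota_qFact_ne_zero 1 e
  have h3 := iota_qFact_ne_zero 1 (c + e + 1)
  have h4 := iota_qInt_ne_zero 1 c
  have h5 := iota_qInt_ne_zero 1 e
  field_simp

/-- extended Gaussian binomial -/
def G (n c : ℕ) : Qq := if c ≤ n then qBinomF n c else 0

lemma G_pascal (n c : ℕ) :
    G (n + 1) (c + 1) = G n (c + 1) + qQ ^ (n - c) * G n c := by
  rcases lt_trichotomy c n with h | h | h
  · obtain ⟨e, rfl⟩ : ∃ e, n = c + e + 1 := ⟨n - c - 1, by omega⟩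
    rw [G, G, G, if_pos (by omega), if_pos (by omega), if_pos (by omega),
      show c + e + 1 - c = e + 1 by omega, show c + e + 1 + 1 = c + e + 2 by omega]
    exact pascal_core c e
  · subst h
    rw [G, G, G, if_pos le_rfl, if_neg (by omega), if_pos le_rfl, Nat.sub_self,
      pow_zero, qBinomF_self, qBinomF_self]
    ring
  · rw [G, G, G, if_neg (by omega), if_neg (by omega), if_neg (by omega)]
    ring

lemma key {R : Type*} [CommRing R] [Algebra Qq R] (x y z : R) (n : ℕ) :
    ∏ j ∈ Finset.range n, (y + z + algebraMap Qq R (1 - qQ ^ j) * x) =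
    ∑ c ∈ Finset.range (n + 1), algebraMap Qq R (G n c) *
      ((∏ j ∈ Finset.range c, (y + algebraMap Qq R (1 - qQ ^ j) * x)) *
       (∏ j ∈ Finset.range (n - c), (z + algebraMap Qq R (1 - qQ ^ j) * (x + y)))) := by
  set e : Qq →+* R := algebraMap Qq R with he
  induction n with
  | zero =>
    simp [G, qBinomF_zero]
  | succ n ih =>
    rw [Finset.prod_range_succ, ih, Finset.sum_mul]
    have hsplit : ∀ c ∈ Finset.range (n + 1),
        e (G n c) * ((∏ j ∈ Finset.range c, (y + e (1 - qQ ^ j) * x)) *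
          (∏ j ∈ Finset.range (n - c), (z + e (1 - qQ ^ j) * (x + y)))) *
          (y + z + e (1 - qQ ^ n) * x)
        = e (qQ ^ (n - c) * G n c) *
            ((∏ j ∈ Finset.range (c + 1), (y + e (1 - qQ ^ j) * x)) *
             (∏ j ∈ Finset.range (n - c), (z + e (1 - qQ ^ j) * (x + y))))
          + e (G n c) *
            ((∏ j ∈ Finset.range c, (y + e (1 - qQ ^ j) * x)) *
             (∏ j ∈ Finset.range (n + 1 - c), (z + e (1 - qQ ^ j) * (x + y)))) := by
      intro c hc
      rw [Finset.mem_range] at hc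
      have hc' : c ≤ n := by omega
      have hdec : (y + z + e (1 - qQ ^ n) * x)
          = e (qQ ^ (n - c)) * (y + e (1 - qQ ^ c) * x)
            + (z + e (1 - qQ ^ (n - c)) * (x + y)) := by
        have hu : (e qQ) ^ (n - c) * (e qQ) ^ c = (e qQ) ^ n := by
          rw [← pow_add, Nat.sub_add_cancel hc']
        simp only [map_sub, map_one, map_pow]
        linear_combination x * hu
      rw [hdec, Finset.prod_range_succ,
        show n + 1 - c = (n - c) + 1 by omega, Finset.prod_range_succ, map_mul, map_pow]
      ring
    rw [Finset.sum_congr rfl hsplit, Finset.sum_add_distrib]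
    have htarget : ∀ c ∈ Finset.range (n + 1),
        e (G (n + 1) (c + 1)) *
          ((∏ j ∈ Finset.range (c + 1), (y + e (1 - qQ ^ j) * x)) *
           (∏ j ∈ Finset.range (n + 1 - (c + 1)), (z + e (1 - qQ ^ j) * (x + y))))
        = e (G n (c + 1)) *
            ((∏ j ∈ Finset.range (c + 1), (y + e (1 - qQ ^ j) * x)) *
             (∏ j ∈ Finset.range (n - c), (z + e (1 - qQ ^ j) * (x + y))))
          + e (qQ ^ (n - c) * G n c) *
            ((∏ j ∈ Finset.range (c + 1), (y + e (1 - qQ ^ j) * x)) *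
             (∏ j ∈ Finset.range (n - c), (z + e (1 - qQ ^ j) * (x + y)))) := by
      intro c _
      rw [G_pascal, Nat.succ_sub_succ, map_add, map_mul, map_pow]
      ring
    rw [Finset.sum_range_succ' (fun c => e (G (n + 1) c) *
        ((∏ j ∈ Finset.range c, (y + e (1 - qQ ^ j) * x)) *
         (∏ j ∈ Finset.range (n + 1 - c), (z + e (1 - qQ ^ j) * (x + y))))) (n + 1),
      Finset.sum_congr rfl htarget, Finset.sum_add_distrib]
    have hG0 : (G (n + 1) 0 : Qq) = 1 := by rw [G, if_pos (Nat.zero_le _), qBinomF_zero]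
    have hol : ∑ c ∈ Finset.range (n + 1), e (G n (c + 1)) *
          ((∏ j ∈ Finset.range (c + 1), (y + e (1 - qQ ^ j) * x)) *
           (∏ j ∈ Finset.range (n - c), (z + e (1 - qQ ^ j) * (x + y))))
        + e (G (n + 1) 0) *
          ((∏ j ∈ Finset.range 0, (y + e (1 - qQ ^ j) * x)) *
           (∏ j ∈ Finset.range (n + 1 - 0), (z + e (1 - qQ ^ j) * (x + y))))
        = ∑ c ∈ Finset.range (n + 1), e (G n c) *
            ((∏ j ∈ Finset.range c, (y + e (1 - qQ ^ j) * x)) *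
             (∏ j ∈ Finset.range (n + 1 - c), (z + e (1 - qQ ^ j) * (x + y)))) := by
      have hG0' : (G n 0 : Qq) = 1 := by rw [G, if_pos (Nat.zero_le _), qBinomF_zero]
      rw [show ∑ c ∈ Finset.range (n + 1), e (G n (c + 1)) *
          ((∏ j ∈ Finset.range (c + 1), (y + e (1 - qQ ^ j) * x)) *
           (∏ j ∈ Finset.range (n - c), (z + e (1 - qQ ^ j) * (x + y))))
        = ∑ c ∈ Finset.range (n + 1), e (G n (c + 1)) *
          ((∏ j ∈ Finset.range (c + 1), (y + e (1 - qQ ^ j) * x)) *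
           (∏ j ∈ Finset.range (n + 1 - (c + 1)), (z + e (1 - qQ ^ j) * (x + y)))) from
          Finset.sum_congr rfl (fun c _ => by rw [Nat.succ_sub_succ])]
      rw [show e (G (n + 1) 0) = e (G n 0) by rw [hG0, hG0']]
      rw [← Finset.sum_range_succ' (fun c => e (G n c) *
          ((∏ j ∈ Finset.range c, (y + e (1 - qQ ^ j) * x)) *
           (∏ j ∈ Finset.range (n + 1 - c), (z + e (1 - qQ ^ j) * (x + y))))) (n + 1)]
      rw [Finset.sum_range_succ]
      have : (G n (n + 1) : Qq) = 0 := by rw [G, if_neg (by omega)]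
      rw [this, map_zero, zero_mul, add_zero]
    rw [add_right_comm, hol]
    ring

lemma coeff_eq (p m n c : ℕ) :
    angleC p m n c * ((ι (qFact (p ^ m) (c / p ^ m)))⁻¹ : Qq) *
      ((ι (qFact (p ^ m) ((n - c) / p ^ m)))⁻¹ : Qq)
    = qBinomF n c * ((ι (qFact (p ^ m) (n / p ^ m)))⁻¹ : Qq) := by
  have h1 := iota_qFact_ne_zero (p ^ m) (n / p ^ m)
  have h2 := iota_qFact_ne_zero (p ^ m) (c / p ^ m)
  have h3 := iota_qFact_ne_zero (p ^ m) ((n - c) / p ^ m)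
  rw [angleC, braceC, inv_div]
  field_simp

lemma key_i (p m : ℕ) {d : ℕ} (i : Fin d) (n : ℕ) :
    ((∏ j ∈ Finset.range n,
        (MvPolynomial.X (i, (1 : Fin 3)) + MvPolynomial.X (i, 2) + MvPolynomial.C (1 - qQ ^ j) * MvPolynomial.X (i, 0))) *
      MvPolynomial.C ((ι (qFact (p ^ m) (n / p ^ m)))⁻¹ : Qq) :
        MvPolynomial (Fin d × Fin 3) Qq)
    = ∑ c ∈ Finset.range (n + 1),
        MvPolynomial.C (angleC p m n c) *
          ((∏ j ∈ Finset.range c, (MvPolynomial.X (i, (1 : Fin 3)) + MvPolynomial.C (1 - qQ ^ j) * MvPolynomial.X (i, 0))) *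
            MvPolynomial.C ((ι (qFact (p ^ m) (c / p ^ m)))⁻¹ : Qq)) *
          ((∏ j ∈ Finset.range (n - c),
              (MvPolynomial.X (i, (2 : Fin 3)) + MvPolynomial.C (1 - qQ ^ j) * (MvPolynomial.X (i, 0) + MvPolynomial.X (i, 1)))) *
            MvPolynomial.C ((ι (qFact (p ^ m) ((n - c) / p ^ m)))⁻¹ : Qq)) := by
  have hkey := key (R := MvPolynomial (Fin d × Fin 3) Qq)
    (MvPolynomial.X (i, 0)) (MvPolynomial.X (i, (1 : Fin 3))) (MvPolynomial.X (i, 2)) n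
  rw [MvPolynomial.algebraMap_eq] at hkey
  rw [hkey, Finset.sum_mul]
  refine Finset.sum_congr rfl fun c hc => ?_
  rw [Finset.mem_range] at hc
  have hGc : G n c = qBinomF n c := if_pos (by omega)
  rw [hGc]
  rw [show (MvPolynomial.C (angleC p m n c) : MvPolynomial (Fin d × Fin 3) Qq) *
        ((∏ j ∈ Finset.range c, (MvPolynomial.X (i, (1 : Fin 3)) + MvPolynomial.C (1 - qQ ^ j) * MvPolynomial.X (i, 0))) *
          MvPolynomial.C ((ι (qFact (p ^ m) (c / p ^ m)))⁻¹ : Qq)) *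
        ((∏ j ∈ Finset.range (n - c),
            (MvPolynomial.X (i, (2 : Fin 3)) + MvPolynomial.C (1 - qQ ^ j) * (MvPolynomial.X (i, 0) + MvPolynomial.X (i, 1)))) *
          MvPolynomial.C ((ι (qFact (p ^ m) ((n - c) / p ^ m)))⁻¹ : Qq))
      = MvPolynomial.C (angleC p m n c * (ι (qFact (p ^ m) (c / p ^ m)))⁻¹ *
            (ι (qFact (p ^ m) ((n - c) / p ^ m)))⁻¹) *
          ((∏ j ∈ Finset.range c, (MvPolynomial.X (i, (1 : Fin 3)) + MvPolynomial.C (1 - qQ ^ j) * MvPolynomial.X (i, 0))) *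
           (∏ j ∈ Finset.range (n - c),
              (MvPolynomial.X (i, (2 : Fin 3)) + MvPolynomial.C (1 - qQ ^ j) * (MvPolynomial.X (i, 0) + MvPolynomial.X (i, 1))))) by
        rw [map_mul, map_mul]; ring]
  rw [coeff_eq, map_mul]
  ring


/-- Explicit comultiplication formula for the level-`m` twisted divided powers,
as an identity in `ℚ(q)[x_i, η_i, ζ_i]` (`x_i = X (i,0)`, `η_i = X (i,1)`,
`ζ_i = X (i,2)`). -/
theorem stmt11 (p : ℕ) (hp : p.Prime) (m d : ℕ) (k : Fin d → ℕ) :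
    (∏ i : Fin d,
        ((∏ j ∈ Finset.range (k i),
            (MvPolynomial.X (i, (1 : Fin 3)) + MvPolynomial.X (i, 2) +
              MvPolynomial.C (1 - qQ ^ j) * MvPolynomial.X (i, 0))) *
          MvPolynomial.C ((ι (qFact (p ^ m) (k i / p ^ m)))⁻¹ : Qq))) =
      ∑ k' ∈ Fintype.piFinset fun i => Finset.range (k i + 1),
        MvPolynomial.C (∏ i, angleC p m (k i) (k' i)) *
          (∏ i : Fin d,
            ((∏ j ∈ Finset.range (k' i),
                (MvPolynomial.X (i, (1 : Fin 3)) +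
                  MvPolynomial.C (1 - qQ ^ j) * MvPolynomial.X (i, 0))) *
              MvPolynomial.C ((ι (qFact (p ^ m) (k' i / p ^ m)))⁻¹ : Qq))) *
          (∏ i : Fin d,
            ((∏ j ∈ Finset.range (k i - k' i),
                (MvPolynomial.X (i, (2 : Fin 3)) +
                  MvPolynomial.C (1 - qQ ^ j) *
                    (MvPolynomial.X (i, 0) + MvPolynomial.X (i, 1)))) *
              MvPolynomial.C ((ι (qFact (p ^ m) ((k i - k' i) / p ^ m)))⁻¹ : Qq))) := by
  rw [Finset.prod_congr rfl (fun i _ => key_i p m i (k i)), Finset.prod_univ_sum]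
  refine Finset.sum_congr rfl fun k' _ => ?_
  rw [Finset.prod_mul_distrib, Finset.prod_mul_distrib, map_prod]
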